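/- Let p ≥ 2 be an integer and let i and j be nonnegative integers with i ≥ j. Then (1−(p−1)x)^{2(i−j)+1} · Σ_{n≥0} ((pn+i)! / (n!·((p−1)n+j)!)) · x^n · (1+x)^{−(pn+i+1)}, as a formal power series over ℚ, is a polynomial in x of degree at most i−j. -/

import Mathlib

/-!
Write `F i j = ∑ₙ (pn+i)! / (n! ((p-1)n+j)!) xⁿ (1+x)^(-(pn+i+1))` and `θ = x d/dx`.
Term by term one checks `(1 - (p-1)x) F (i+1) j = (pθ + i + 1) F i j`, so, since `θ` raises the
order of the pole at `x = 1/(p-1)` by one, induction on `i - j` reduces the theorem to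
`F j j = 1 / (1 - (p-1)x)`. For that, the series `H r s = ∑ₙ C(pn+r, n) xⁿ (1+x)^(-(pn+s+1))`
satisfy Pascal-type recurrences in `r` and `s` which determine them coefficient by coefficient,
and `(1+x)^(r-s) / (1 - (p-1)x)` satisfies the same recurrences.
-/

open PowerSeries Finset
open scoped Nat

theorem Polynomial.natDegree_X_mul_derivative_le {R : Type*} [CommSemiring R]
    (q : Polynomial R) : (Polynomial.X * derivative q).natDegree ≤ q.natDegree := by
  rw [natDegree_le_iff_coeff_eq_zero]
  rintro (_ | N) hN
  · simp
  · rw [coeff_X_mul, coeff_derivative, coeff_eq_zero_of_natDegree_lt hN, zero_mul]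

theorem Nat.choose_mul_add_one_eq_mul_choose (p n : ℕ) (hp : 1 ≤ p) :
    (p * (n + 1)).choose (n + 1) = p * (p * n + (p - 1)).choose n := by
  have h := Nat.add_one_mul_choose_eq (p * n + (p - 1)) n
  rw [show p * n + (p - 1) + 1 = p * (n + 1) by grind] at h
  apply Nat.eq_of_mul_eq_mul_right (by omega : 0 < n + 1)
  rw [← h]
  ring

namespace PowerSeries

section orderSum

variable {R : Type*} [CommSemiring R]

/-- `∑ₙ f n` for a family with `X ^ n ∣ f n`: only the terms `n ≤ m` can contribute to the
coefficient of `X ^ m`, so the sum is truncated there. -/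
noncomputable def orderSum (f : ℕ → R⟦X⟧) : R⟦X⟧ :=
  mk fun m => ∑ n ∈ range (m + 1), coeff m (f n)

@[simp]
theorem coeff_orderSum (f : ℕ → R⟦X⟧) (m : ℕ) :
    coeff m (orderSum f) = ∑ n ∈ range (m + 1), coeff m (f n) :=
  coeff_mk _ _

theorem orderSum_add (f g : ℕ → R⟦X⟧) :
    orderSum (fun n => f n + g n) = orderSum f + orderSum g := by
  ext m
  simp [sum_add_distrib]

theorem orderSum_C_mul (a : R) (f : ℕ → R⟦X⟧) :
    orderSum (fun n => C a * f n) = C a * orderSum f := by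
  ext m
  simp [coeff_C_mul, mul_sum]

theorem orderSum_eq_add_X_mul {f g : ℕ → R⟦X⟧} (h : ∀ n, f (n + 1) = X * g n) :
    orderSum f = f 0 + X * orderSum g := by
  ext m
  rcases m with _ | m
  · simp
  · rw [coeff_orderSum, sum_range_succ', add_comm]
    simp [h, coeff_succ_X_mul]

theorem mul_orderSum (g : R⟦X⟧) {f : ℕ → R⟦X⟧} (hf : ∀ n, X ^ n ∣ f n) :
    g * orderSum f = orderSum fun n => g * f n := by
  ext m
  have coeff_eq_zero : ∀ n b, b < n → coeff b (f n) = 0 := fun n b hb =>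
    X_pow_dvd_iff.mp (hf n) b hb
  simp only [coeff_mul, coeff_orderSum]
  rw [sum_comm]
  refine sum_congr rfl fun x hx => ?_
  have hx2 : x.2 ≤ m := Finset.HasAntidiagonal.antidiagonal.snd_le hx
  rw [mul_sum, ← sum_range_add_sum_Ico _ (Nat.succ_le_succ hx2), sum_eq_zero (s := Ico _ _)
    fun n hn => by rw [coeff_eq_zero n x.2 (by simp at hn; omega), mul_zero], add_zero]

theorem X_pow_dvd_C_mul_X_pow_mul (a : R) (n : ℕ) (f : R⟦X⟧) : X ^ n ∣ C a * X ^ n * f :=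
  ⟨C a * f, by ring⟩

theorem X_mul_derivative_orderSum (f : ℕ → R⟦X⟧) :
    X * d⁄dX R (orderSum f) = orderSum fun n => X * d⁄dX R (f n) := by
  ext m
  rcases m with _ | m
  · simp
  · simp [coeff_succ_X_mul, coeff_derivative, sum_mul]

theorem eq_zero_of_recurrence (D : ℕ → ℕ → R⟦X⟧) (k a b : ℕ)
    (c : R) (hs : ∀ r t, D r t = (1 + X) * D r (t + 1))
    (hr : ∀ r t, D (r + 1) t = D r (t + 1) + X * D (r + k) (t + 1))
    (h0 : D 0 0 = X * (C c * D a b)) (r t : ℕ) : D r t = 0 := by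
  suffices ∀ m r t, coeff m (D r t) = 0 from ext fun m => by simpa using this m r t
  refine fun m => Nat.strong_induction_on m fun m ih => ?_
  have coeff_X_mul_eq_zero (f : R⟦X⟧) (hf : ∀ l < m, coeff l f = 0) :
      coeff m (X * f) = 0 := by
    rcases m with _ | m
    · simp
    · rw [coeff_succ_X_mul, hf m m.lt_succ_self]
  have hD : ∀ r t, coeff m (X * D r t) = 0 := fun r t =>
    coeff_X_mul_eq_zero _ fun l hl => ih l hl r t
  have shift_t : ∀ r t, coeff m (D r t) = coeff m (D r 0) := by
    intro r t
    induction t with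
    | zero => rfl
    | succ t iht => rw [← iht, hs r t, add_mul, one_mul, map_add, hD, add_zero]
  have base : ∀ r, coeff m (D r 0) = 0 := by
    intro r
    induction r with
    | zero =>
      rw [h0]
      exact coeff_X_mul_eq_zero _ fun l hl => by rw [coeff_C_mul, ih l hl, mul_zero]
    | succ r ihr => rw [hr, map_add, hD, add_zero, shift_t, ihr]
  intro r t
  rw [shift_t, base]

end orderSum

section inverse

variable {K : Type*} [Field K]

theorem one_add_X_mul_inv : (1 + X : K⟦X⟧) * (1 + X)⁻¹ = 1 :=
  PowerSeries.mul_inv_cancel _ (by simp)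

theorem inv_pow_one_add_X (e : ℕ) : (1 + X : K⟦X⟧)⁻¹ ^ e = ((1 + X) ^ e)⁻¹ := by
  rw [PowerSeries.eq_inv_iff_mul_eq_one (by simp), ← mul_pow, mul_comm, one_add_X_mul_inv,
    one_pow]

theorem X_mul_derivative_X_pow (n : ℕ) : X * d⁄dX K (X ^ n) = (n : K⟦X⟧) * X ^ n := by
  induction n with
  | zero => simp
  | succ n ih =>
    rw [pow_succ, Derivation.leibniz, smul_eq_mul, smul_eq_mul, derivative_X]
    push_cast
    linear_combination X * ih

theorem derivative_inv_one_add_X_pow (e : ℕ) :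
    d⁄dX K ((1 + X : K⟦X⟧)⁻¹ ^ e) = -(e * (1 + X)⁻¹ ^ (e + 1)) := by
  induction e with
  | zero => simp
  | succ e ih =>
    rw [pow_succ, Derivation.leibniz, smul_eq_mul, smul_eq_mul, ih, derivative_inv']
    simp
    ring

theorem X_mul_derivative_X_pow_mul_inv_pow (n e : ℕ) :
    X * d⁄dX K (X ^ n * (1 + X)⁻¹ ^ e) =
      (n : K⟦X⟧) * X ^ n * (1 + X)⁻¹ ^ e -
        (e : K⟦X⟧) * X ^ (n + 1) * (1 + X)⁻¹ ^ (e + 1) := by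
  rw [Derivation.leibniz, smul_eq_mul, smul_eq_mul, derivative_inv_one_add_X_pow]
  linear_combination (1 + X)⁻¹ ^ e * X_mul_derivative_X_pow (K := K) n

end inverse

section fussSeries

variable {K : Type*} [Field K]

noncomputable def fussSeries (p s : ℕ) (a : ℕ → K) : K⟦X⟧ :=
  orderSum fun n => C (a n) * X ^ n * (1 + X)⁻¹ ^ (p * n + s + 1)

theorem fussSeries_eq_one_add_X_mul (p s : ℕ) (a : ℕ → K) :
    fussSeries p s a = (1 + X) * fussSeries p (s + 1) a := by
  rw [fussSeries, fussSeries, mul_orderSum _ fun n => X_pow_dvd_C_mul_X_pow_mul _ _ _]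
  congr! 2 with n
  linear_combination (-(C (a n) * X ^ n * (1 + X)⁻¹ ^ (p * n + s + 1))) *
    one_add_X_mul_inv (K := K)

theorem fussSeries_add (p s : ℕ) (a b : ℕ → K) :
    fussSeries p s (fun n => a n + b n) = fussSeries p s a + fussSeries p s b := by
  rw [fussSeries, fussSeries, fussSeries, ← orderSum_add]
  simp only [map_add, add_mul]

theorem fussSeries_const_mul (p s : ℕ) (c : K) (a : ℕ → K) :
    fussSeries p s (fun n => c * a n) = C c * fussSeries p s a := by
  rw [fussSeries, fussSeries, ← orderSum_C_mul]
  simp only [map_mul, mul_assoc]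

theorem fussSeries_eq_add_X_mul (p s : ℕ) (a : ℕ → K) :
    fussSeries p s a =
      C (a 0) * (1 + X)⁻¹ ^ (s + 1) + X * fussSeries p (s + p) fun n => a (n + 1) := by
  rw [fussSeries, fussSeries, orderSum_eq_add_X_mul
    (g := fun n => C (a (n + 1)) * X ^ n * (1 + X)⁻¹ ^ (p * n + (s + p) + 1)) fun n => ?_]
  · simp
  · rw [show p * (n + 1) + s + 1 = p * n + (s + p) + 1 by ring]
    ring

noncomputable def chooseSeries (p r s : ℕ) : K⟦X⟧ :=
  fussSeries p s fun n => ((p * n + r).choose n : K)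

theorem chooseSeries_succ_left (p r s : ℕ) :
    chooseSeries (K := K) p (r + 1) s =
      chooseSeries p r s + X * chooseSeries p (r + p) (s + p) := by
  have pascal : (fun n => ((p * (n + 1) + (r + 1)).choose (n + 1) : K)) =
      fun n => ((p * (n + 1) + r).choose (n + 1) : K) + ((p * n + (r + p)).choose n : K) := by
    ext n
    rw [show p * (n + 1) + (r + 1) = p * (n + 1) + r + 1 by ring, Nat.choose_succ_succ',
      show p * n + (r + p) = p * (n + 1) + r by ring]
    push_cast
    ring
  rw [chooseSeries, chooseSeries, chooseSeries, fussSeries_eq_add_X_mul p s,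
    fussSeries_eq_add_X_mul p s fun n => ((p * n + r).choose n : K), pascal, fussSeries_add]
  simp only [mul_zero, zero_add, Nat.choose_zero_right]
  ring

theorem chooseSeries_zero_zero (p : ℕ) (hp : 1 ≤ p) :
    chooseSeries (K := K) p 0 0 = (1 + X)⁻¹ + X * (C (p : K) * chooseSeries p (p - 1) p) := by
  have absorb : (fun n => ((p * (n + 1) + 0).choose (n + 1) : K)) =
      fun n => (p : K) * ((p * n + (p - 1)).choose n : K) := by
    ext n
    rw [add_zero, Nat.choose_mul_add_one_eq_mul_choose p n hp]
    push_cast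
    rfl
  rw [chooseSeries, fussSeries_eq_add_X_mul, absorb, fussSeries_const_mul, chooseSeries]
  simp

theorem one_sub_mul_chooseSeries_self (p r : ℕ) (hp : 1 ≤ p) :
    (1 - C ((p : K) - 1) * X) * chooseSeries p r r = 1 := by
  have hu : (1 + X) * (1 + X)⁻¹ = (1 : K⟦X⟧) := one_add_X_mul_inv
  -- the defect of the closed form `chooseSeries p r (r + t) = (1 + X)⁻¹ ^ t / (1 - (p-1)X)`
  let D : ℕ → ℕ → K⟦X⟧ := fun r t =>
    (1 - C ((p : K) - 1) * X) * chooseSeries p r (r + t) - (1 + X)⁻¹ ^ t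
  have hs : ∀ r t, D r t = (1 + X) * D r (t + 1) := by
    intro r t
    simp only [D]
    rw [chooseSeries, fussSeries_eq_one_add_X_mul, ← chooseSeries, add_assoc]
    linear_combination (1 + X)⁻¹ ^ t * hu
  have hr : ∀ r t, D (r + 1) t = D r (t + 1) + X * D (r + p) (t + 1) := by
    intro r t
    simp only [D]
    rw [chooseSeries_succ_left, show r + 1 + t + p = r + p + (t + 1) by ring,
      show r + 1 + t = r + (t + 1) by ring]
    linear_combination (1 + X)⁻¹ ^ t * hu
  have h0 : D 0 0 = X * (C (p : K) * D (p - 1) 1) := by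
    simp only [D]
    rw [add_zero, chooseSeries_zero_zero p hp, show p - 1 + 1 = p by omega]
    simp only [map_sub, map_natCast, map_one]
    linear_combination hu
  simpa [D, sub_eq_zero] using eq_zero_of_recurrence D p (p - 1) 1 (p : K) hs hr h0 r 0

noncomputable def fussCatalanSeries (p i j : ℕ) : K⟦X⟧ :=
  fussSeries p i fun n => ((p * n + i)! : K) / ((n ! : K) * (((p - 1) * n + j)! : K))

theorem fussCatalanSeries_self [CharZero K] (p j : ℕ) (hp : 1 ≤ p) :
    fussCatalanSeries (K := K) p j j = chooseSeries p j j := by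
  rw [fussCatalanSeries, chooseSeries]
  congr! 2 with n
  rw [Nat.cast_choose K (by nlinarith), show p * n + j - n = (p - 1) * n + j by
    rw [Nat.sub_mul, one_mul]; have := Nat.le_mul_of_pos_left n hp; omega]

theorem one_sub_mul_fussCatalanSeries_succ (p i j : ℕ) :
    (1 - C ((p : K) - 1) * X) * fussCatalanSeries p (i + 1) j =
      C (p : K) * (X * d⁄dX K (fussCatalanSeries p i j)) +
        C ((i : K) + 1) * fussCatalanSeries p i j := by
  rw [fussCatalanSeries, fussCatalanSeries, fussSeries, fussSeries,
    mul_orderSum _ fun n => X_pow_dvd_C_mul_X_pow_mul _ _ _, X_mul_derivative_orderSum,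
    ← orderSum_C_mul, ← orderSum_C_mul, ← orderSum_add]
  congr! 2 with n
  set a : K := ((p * n + i)! : K) / ((n ! : K) * (((p - 1) * n + j)! : K))
  have ha : ((p * n + (i + 1))! : K) / ((n ! : K) * (((p - 1) * n + j)! : K)) =
      (p * n + i + 1 : ℕ) * a := by
    rw [← add_assoc, Nat.factorial_succ, Nat.cast_mul, mul_div_assoc]
  have hd : X * d⁄dX K (C a * X ^ n * (1 + X)⁻¹ ^ (p * n + i + 1)) =
      C a * (X * d⁄dX K (X ^ n * (1 + X)⁻¹ ^ (p * n + i + 1))) := by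
    rw [mul_assoc, Derivation.leibniz, derivative_C, smul_zero, add_zero, smul_eq_mul]
    ring
  rw [ha, hd, X_mul_derivative_X_pow_mul_inv_pow,
    show p * n + (i + 1) + 1 = p * n + i + 1 + 1 by ring]
  simp only [map_sub, map_add, map_mul, map_natCast, map_one]
  push_cast
  linear_combination C a * X ^ n * (p * n + i + 1) * (1 + X)⁻¹ ^ (p * n + i + 1) *
    one_add_X_mul_inv (K := K)

/-- If `(1 - (p-1)X) ^ (2k+1) * F = q`, then `(1 - (p-1)X) ^ (2k+2) * (pθ + i + 1) F` is
`fussStep p i k q`, where `θ = X d/dX`: apply `θ` to the hypothesis and use Leibniz. -/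
noncomputable def fussStep (p i k : ℕ) (q : Polynomial K) : Polynomial K :=
  Polynomial.C (p : K) * ((1 - Polynomial.C ((p : K) - 1) * Polynomial.X) *
      (Polynomial.X * Polynomial.derivative q) +
    Polynomial.C ((2 * k + 1 : ℕ) * ((p : K) - 1)) * (Polynomial.X * q)) +
  Polynomial.C ((i + 1 : ℕ) : K) * ((1 - Polynomial.C ((p : K) - 1) * Polynomial.X) * q)

open Polynomial in
theorem natDegree_fussStep_le (p i k : ℕ) {q : Polynomial K} (hq : q.natDegree ≤ k) :
    (fussStep p i k q).natDegree ≤ k + 1 := by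
  have hL : (1 - Polynomial.C ((p : K) - 1) * Polynomial.X).natDegree ≤ 1 := by compute_degree
  have hXq := natDegree_mul_le_of_le natDegree_X_le hq
  have hLXq' := natDegree_mul_le_of_le hL ((natDegree_X_mul_derivative_le q).trans hq)
  have hLq := natDegree_mul_le_of_le hL hq
  exact natDegree_add_le_of_degree_le
    ((natDegree_C_mul_le _ _).trans (natDegree_add_le_of_degree_le (hLXq'.trans (by omega))
      ((natDegree_C_mul_le _ _).trans (hXq.trans (by omega)))))
    ((natDegree_C_mul_le _ _).trans (hLq.trans (by omega)))

theorem pow_mul_fussCatalanSeries_succ (p i j k : ℕ) {q : Polynomial K}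
    (hq : (1 - C ((p : K) - 1) * X) ^ (2 * k + 1) * fussCatalanSeries p i j = (q : K⟦X⟧)) :
    (1 - C ((p : K) - 1) * X) ^ (2 * (k + 1) + 1) * fussCatalanSeries p (i + 1) j =
      (fussStep p i k q : K⟦X⟧) := by
  have hstep := one_sub_mul_fussCatalanSeries_succ (K := K) p i j
  have hderiv := congrArg (fun f => X * d⁄dX K f) hq
  simp only [Derivation.leibniz, derivative_pow, smul_eq_mul, derivative_coe, map_sub,
    derivative_one, derivative_C, derivative_X, Nat.add_sub_cancel, mul_one,
    zero_sub] at hderiv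
  simp only [fussStep, Polynomial.coe_add, Polynomial.coe_mul, Polynomial.coe_C,
    Polynomial.coe_X, Polynomial.coe_sub, Polynomial.coe_one]
  simp only [map_mul, map_add, map_sub, map_natCast, map_one] at hq hstep hderiv ⊢
  push_cast at hq hstep hderiv ⊢
  set P : K⟦X⟧ := (p : K⟦X⟧)
  set L : K⟦X⟧ := 1 - (P - 1) * X
  linear_combination L ^ (2 * k + 2) * hstep + P * L * hderiv +
    (P * (2 * k + 1) * (P - 1) * X + (i + 1) * L) * hq

theorem exists_polynomial_eq_pow_mul_fussCatalanSeries [CharZero K] (p j k : ℕ) (hp : 1 ≤ p) :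
    ∃ q : Polynomial K, q.natDegree ≤ k ∧
      (1 - C ((p : K) - 1) * X) ^ (2 * k + 1) * fussCatalanSeries p (j + k) j = (q : K⟦X⟧) := by
  induction k with
  | zero =>
    refine ⟨1, by simp, ?_⟩
    rw [add_zero, fussCatalanSeries_self p j hp, mul_zero, zero_add, pow_one,
      one_sub_mul_chooseSeries_self p j hp, Polynomial.coe_one]
  | succ k ih =>
    obtain ⟨q, hdeg, hq⟩ := ih
    exact ⟨fussStep p (j + k) k q, natDegree_fussStep_le p (j + k) k hdeg,
      pow_mul_fussCatalanSeries_succ p (j + k) j k hq⟩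

end fussSeries

end PowerSeries

/-- For `p ≥ 2` and nonnegative integers `i ≥ j`,
`(1−(p−1)x)^{2(i−j)+1} · ∑_{n≥0} ((pn+i)!/(n!·((p−1)n+j)!))·xⁿ·(1+x)^{−(pn+i+1)}`,
as a formal power series over `ℚ`, is a polynomial in `x` of degree at most `i − j`.
(The `n`-th term of the sum has order `n`, so the coefficient of `x^m` only receives
contributions from `n ≤ m`; the sum is rendered accordingly.) -/
theorem fuss_catalan_inverse_polynomial' (p : ℕ) (hp : 2 ≤ p) (i j : ℕ) (hij : j ≤ i) :
    ∃ q : Polynomial ℚ, q.degree ≤ (i - j : ℕ) ∧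
      (1 - PowerSeries.C (R := ℚ) ((p : ℚ) - 1) * X) ^ (2 * (i - j) + 1) *
        (PowerSeries.mk fun m =>
          ∑ n ∈ Finset.range (m + 1),
            (((p * n + i).factorial : ℚ) /
                ((n.factorial : ℚ) * (((p - 1) * n + j).factorial : ℚ))) *
              coeff (R := ℚ) m (X ^ n * ((1 + X : PowerSeries ℚ) ^ (p * n + i + 1))⁻¹)) =
        (q : PowerSeries ℚ) := by
  obtain ⟨q, hdeg, hq⟩ :=
    exists_polynomial_eq_pow_mul_fussCatalanSeries (K := ℚ) p j (i - j) (by omega)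
  rw [Nat.add_sub_cancel' hij] at hq
  refine ⟨q, Polynomial.natDegree_le_iff_degree_le.mp hdeg, hq ▸ ?_⟩
  congr 1
  ext m
  simp only [fussCatalanSeries, fussSeries, coeff_orderSum, coeff_mk, mul_assoc, coeff_C_mul,
    inv_pow_one_add_X]
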